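/- arXiv:2410.08939 — 5 statements merged into one kernel-verified Lean document; each statement's English description precedes it below -/
import Mathlib

section
/- For a Gaussian target, the composition of block-wise common-random-numbers couplings of the Gibbs full-conditional updates is W₂-optimal at every number of steps: for every integer n ≥ 1 and every pair of starting points (x, y), the law of (X^n, Y^n) under n iterations of the coupled kernel P̄^{c*} is a coupling of P^n(x,·) and P^n(y,·) that minimizes ∫‖u − v‖² γ(du, dv) over all couplings γ of P^n(x,·) and P^n(y,·); the minimal value equals ‖B^n(x − y)‖², where B is the autoregressive matrix of P (i.e. P(x,·) = N(Bx + b, Σ − BΣBᵀ)). -/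
/-!
Every block update is affine in the state, and with a shared innovation both chains receive the
same noise term, so it cancels in `X − Y`: the difference evolves deterministically,
`Xⁿ − Yⁿ = Bⁿ(x − y)`, and the common-random-numbers coupling has cost `‖Bⁿ(x − y)‖²`.
For an arbitrary coupling `γ`, Jensen's inequality gives
`∫‖u − v‖² dγ ≥ ‖∫(u − v) dγ‖² = ‖E Xⁿ − E Yⁿ‖²`, and the difference of the means of `Pⁿ(x,·)`
and `Pⁿ(y,·)` is again `Bⁿ(x − y)`.
-/

open MeasureTheory ProbabilityTheory Matrix Filter
open scoped ENNReal NNReal Classical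

noncomputable section

/-- Standard Gaussian measure on `ι → ℝ`. -/
def stdGaussian (ι : Type*) [Fintype ι] : Measure (ι → ℝ) :=
  Measure.pi fun _ => gaussianReal 0 1

/-- The state space of a `K`-block Gibbs sampler with block sizes `I k`. -/
abbrev GState (K : ℕ) (I : Fin K → ℕ) := ∀ k : Fin K, (Fin (I k) → ℝ)

/-- Squared Euclidean norm on the block state space. -/
def gNormSq {K : ℕ} {I : Fin K → ℕ} (v : GState K I) : ℝ := ∑ k, ∑ i, (v k i) ^ 2

/-- The block-`k` Gibbs update: replace block `k` by its full-conditional mean plus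
`R k` applied to the innovation `z`, where `A` collects the regression matrices and
`R k` is a square root of the conditional covariance `Q_kk⁻¹`. -/
def gibbsUpdate {K : ℕ} {I : Fin K → ℕ} (μv : GState K I)
    (A : ∀ k l : Fin K, Matrix (Fin (I k)) (Fin (I l)) ℝ)
    (R : ∀ k : Fin K, Matrix (Fin (I k)) (Fin (I k)) ℝ)
    (x : GState K I) (k : Fin K) (z : Fin (I k) → ℝ) : GState K I :=
  Function.update x k
    (μv k + (∑ j ∈ Finset.univ.erase k, (A k j).mulVec (x j - μv j)) + (R k).mulVec z)

/-- One full sweep of the blocked Gibbs sampler in the updating order `σ 0, …, σ (K-1)`,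
using the innovations `zs`. -/
def gibbsSweep {K : ℕ} {I : Fin K → ℕ} (μv : GState K I)
    (A : ∀ k l : Fin K, Matrix (Fin (I k)) (Fin (I l)) ℝ)
    (R : ∀ k : Fin K, Matrix (Fin (I k)) (Fin (I k)) ℝ) (σ : Equiv.Perm (Fin K))
    (x : GState K I) (zs : ∀ k : Fin K, Fin (I k) → ℝ) : GState K I :=
  ((List.finRange K).map σ).foldl (fun acc k => gibbsUpdate μv A R acc k (zs k)) x

/-- `n` sweeps of the blocked Gibbs sampler driven by the innovations `ζ 0, …, ζ (n-1)`. -/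
def gibbsIter {K : ℕ} {I : Fin K → ℕ} (μv : GState K I)
    (A : ∀ k l : Fin K, Matrix (Fin (I k)) (Fin (I l)) ℝ)
    (R : ∀ k : Fin K, Matrix (Fin (I k)) (Fin (I k)) ℝ) (σ : Equiv.Perm (Fin K))
    (n : ℕ) (ζ : Fin n → ∀ k : Fin K, Fin (I k) → ℝ) (x : GState K I) : GState K I :=
  (List.finRange n).foldl (fun acc i => gibbsSweep μv A R σ acc (ζ i)) x

/-- Law of the innovations of `n` sweeps: i.i.d. standard Gaussians for each sweep and block. -/
def innovLaw (K : ℕ) (I : Fin K → ℕ) (n : ℕ) :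
    Measure (Fin n → ∀ k : Fin K, Fin (I k) → ℝ) :=
  Measure.pi fun _ => Measure.pi fun k => stdGaussian (Fin (I k))

/-- The `n`-step marginal law `Pⁿ(x, ·)` of the blocked Gibbs sampler started at `x`. -/
def nStepLaw {K : ℕ} {I : Fin K → ℕ} (μv : GState K I)
    (A : ∀ k l : Fin K, Matrix (Fin (I k)) (Fin (I l)) ℝ)
    (R : ∀ k : Fin K, Matrix (Fin (I k)) (Fin (I k)) ℝ) (σ : Equiv.Perm (Fin K))
    (n : ℕ) (x : GState K I) : Measure (GState K I) :=
  (innovLaw K I n).map (fun ζ => gibbsIter μv A R σ n ζ x)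

/-- Law of `(Xⁿ, Yⁿ)` under `n` iterations of the composed common-random-numbers coupling
`P̄^{c*}`: both chains perform the block updates in the same order, each block update using a
single shared Gaussian innovation. -/
def crnPairLaw {K : ℕ} {I : Fin K → ℕ} (μv : GState K I)
    (A : ∀ k l : Fin K, Matrix (Fin (I k)) (Fin (I l)) ℝ)
    (R : ∀ k : Fin K, Matrix (Fin (I k)) (Fin (I k)) ℝ) (σ : Equiv.Perm (Fin K))
    (n : ℕ) (x y : GState K I) : Measure (GState K I × GState K I) :=
  (innovLaw K I n).map (fun ζ => (gibbsIter μv A R σ n ζ x, gibbsIter μv A R σ n ζ y))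

/-- The positive semidefinite square root of a positive semidefinite matrix
(as in the older Mathlib, where it has since been removed). -/
def Matrix.PosSemidef.sqrt {n 𝕜 : Type*} [Fintype n] [DecidableEq n] [RCLike 𝕜]
    [PartialOrder 𝕜]     {A : Matrix n n 𝕜} (hA : A.PosSemidef) : Matrix n n 𝕜 :=
  hA.1.eigenvectorUnitary.1 * diagonal ((↑) ∘ (√·) ∘ hA.1.eigenvalues) *
    (star hA.1.eigenvectorUnitary : Matrix n n 𝕜)

/-- The linear part `v ↦ B v` of the noiseless mean map `x ↦ sweep(x, 0)` of one Gibbs sweep;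
`B` is the autoregressive matrix of the sweep kernel `P(x,·) = N(Bx + b, Σ − BΣBᵀ)`. -/
def sweepLin {K : ℕ} {I : Fin K → ℕ} (μv : GState K I)
    (A : ∀ k l : Fin K, Matrix (Fin (I k)) (Fin (I l)) ℝ)
    (R : ∀ k : Fin K, Matrix (Fin (I k)) (Fin (I k)) ℝ) (σ : Equiv.Perm (Fin K))
    (v : GState K I) : GState K I :=
  gibbsSweep μv A R σ v 0 - gibbsSweep μv A R σ 0 0

lemma ofReal_sq_integral_le_lintegral_sq {Ω : Type*} [MeasurableSpace Ω] {P : Measure Ω}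
    [IsProbabilityMeasure P] {f : Ω → ℝ} (hf : Integrable f P) :
    ENNReal.ofReal ((∫ ω, f ω ∂P) ^ 2) ≤ ∫⁻ ω, ENNReal.ofReal (f ω ^ 2) ∂P := by
  by_cases htop : ∫⁻ ω, ENNReal.ofReal (f ω ^ 2) ∂P = ⊤
  · exact htop ▸ le_top
  have hsq : Integrable (fun ω => f ω ^ 2) P :=
    ⟨hf.aestronglyMeasurable.pow 2, by
      simpa [hasFiniteIntegral_iff_ofReal (ae_of_all _ fun ω => sq_nonneg (f ω)),
        lt_top_iff_ne_top] using htop⟩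
  have hvar := variance_nonneg f P
  rw [variance_eq_sub ((memLp_two_iff_integrable_sq hf.aestronglyMeasurable).2 hsq)] at hvar
  rw [← ofReal_integral_eq_lintegral_ofReal hsq (ae_of_all _ fun ω => sq_nonneg (f ω))]
  exact ENNReal.ofReal_le_ofReal (by simpa using hvar)

lemma integrable_id_pi {ι : Type*} [Fintype ι] {E : ι → Type*} [∀ i, NormedAddCommGroup (E i)]
    [∀ i, MeasurableSpace (E i)] {μ : ∀ i, Measure (E i)} [∀ i, IsFiniteMeasure (μ i)]
    (h : ∀ i, Integrable id (μ i)) : Integrable id (Measure.pi μ) :=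
  Integrable.of_eval fun i => integrable_eval (h i)

section GibbsSampler

variable {K : ℕ} {I : Fin K → ℕ}

lemma ofReal_gNormSq (v : GState K I) :
    ENNReal.ofReal (gNormSq v) = ∑ k, ∑ i, ENNReal.ofReal (v k i ^ 2) := by
  rw [gNormSq, ENNReal.ofReal_sum_of_nonneg fun k _ => by positivity]
  exact Finset.sum_congr rfl fun k _ => ENNReal.ofReal_sum_of_nonneg fun i _ => sq_nonneg _

lemma continuous_gNormSq : Continuous (gNormSq (K := K) (I := I)) := by
  unfold gNormSq
  fun_prop

lemma ofReal_gNormSq_integral_le {Ω : Type*} [MeasurableSpace Ω] {P : Measure Ω}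
    [IsProbabilityMeasure P] {f : Ω → GState K I} (hf : Integrable f P) :
    ENNReal.ofReal (gNormSq (∫ ω, f ω ∂P)) ≤ ∫⁻ ω, ENNReal.ofReal (gNormSq (f ω)) ∂P := by
  have hcoord (k : Fin K) (i : Fin (I k)) : Integrable (fun ω => f ω k i) P :=
    (hf.eval k).eval i
  have hsq (k : Fin K) (i : Fin (I k)) : AEMeasurable (fun ω => ENNReal.ofReal (f ω k i ^ 2)) P :=
    ((hcoord k i).aemeasurable.pow_const 2).ennreal_ofReal
  simp only [ofReal_gNormSq]
  rw [lintegral_finsetSum' _ fun k _ => Finset.aemeasurable_fun_sum _ fun i _ => hsq k i]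
  gcongr with k
  rw [lintegral_finsetSum' _ fun i _ => hsq k i]
  gcongr with i
  rw [eval_integral (fun k => hf.eval k) k, eval_integral (fun i => hcoord k i) i]
  exact ofReal_sq_integral_le_lintegral_sq (hcoord k i)

lemma ofReal_gNormSq_sub_integral_le_lintegral {μ ν : Measure (GState K I)}
    [IsProbabilityMeasure μ] (hμ : Integrable id μ) (hν : Integrable id ν)
    {γ : Measure (GState K I × GState K I)} (h₁ : γ.map Prod.fst = μ) (h₂ : γ.map Prod.snd = ν) :
    ENNReal.ofReal (gNormSq (∫ u, u ∂μ - ∫ v, v ∂ν))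
      ≤ ∫⁻ p, ENNReal.ofReal (gNormSq (p.1 - p.2)) ∂γ := by
  subst h₁ h₂
  have : IsProbabilityMeasure γ := Measure.isProbabilityMeasure_of_map Prod.fst
  have hfst : Integrable Prod.fst γ := hμ.comp_measurable measurable_fst
  have hsnd : Integrable Prod.snd γ := hν.comp_measurable measurable_snd
  rw [integral_map (f := fun u => u) measurable_fst.aemeasurable aestronglyMeasurable_id,
    integral_map (f := fun v => v) measurable_snd.aemeasurable aestronglyMeasurable_id,
    ← integral_sub hfst hsnd]
  exact ofReal_gNormSq_integral_le (hfst.sub hsnd)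

variable (μv : GState K I) (A : ∀ k l : Fin K, Matrix (Fin (I k)) (Fin (I l)) ℝ)
  (R : ∀ k : Fin K, Matrix (Fin (I k)) (Fin (I k)) ℝ) (σ : Equiv.Perm (Fin K))

lemma gibbsUpdate_sub_gibbsUpdate (x y : GState K I) (k : Fin K) (z z' : Fin (I k) → ℝ) :
    gibbsUpdate μv A R x k z - gibbsUpdate μv A R y k z'
      = gibbsUpdate 0 A R (x - y) k (z - z') := by
  ext j : 1
  by_cases hj : j = k
  · subst hj
    simp only [gibbsUpdate, Pi.sub_apply, Function.update_self, Pi.zero_apply, sub_zero,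
      zero_add, Matrix.mulVec_sub, Finset.sum_sub_distrib]
    abel
  · simp [gibbsUpdate, Function.update_of_ne hj]

lemma gibbsSweep_sub_gibbsSweep (x y : GState K I) (zs zs' : ∀ k : Fin K, Fin (I k) → ℝ) :
    gibbsSweep μv A R σ x zs - gibbsSweep μv A R σ y zs'
      = gibbsSweep 0 A R σ (x - y) (zs - zs') := by
  unfold gibbsSweep
  induction (List.finRange K).map σ generalizing x y with
  | nil => rfl
  | cons k l ih =>
    simp only [List.foldl_cons]
    rw [ih, gibbsUpdate_sub_gibbsUpdate]
    rfl

lemma gibbsIter_sub_gibbsIter (n : ℕ) (ζ ζ' : Fin n → ∀ k : Fin K, Fin (I k) → ℝ)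
    (x y : GState K I) :
    gibbsIter μv A R σ n ζ x - gibbsIter μv A R σ n ζ' y
      = gibbsIter 0 A R σ n (ζ - ζ') (x - y) := by
  unfold gibbsIter
  induction List.finRange n generalizing x y with
  | nil => rfl
  | cons i l ih =>
    simp only [List.foldl_cons]
    rw [ih, gibbsSweep_sub_gibbsSweep]
    rfl

lemma gibbsIter_zero_innov (n : ℕ) (v : GState K I) :
    gibbsIter 0 A R σ n 0 v = (sweepLin μv A R σ)^[n] v := by
  have hsweep : sweepLin μv A R σ = fun v => gibbsSweep 0 A R σ v 0 := by
    ext v : 1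
    rw [sweepLin, gibbsSweep_sub_gibbsSweep, sub_zero, sub_self]
  have := List.foldl_const (fun v => gibbsSweep 0 A R σ v 0) v (List.finRange n)
  rwa [List.length_finRange, ← hsweep] at this

lemma gibbsIter_sub_gibbsIter_same_innov (n : ℕ) (ζ : Fin n → ∀ k : Fin K, Fin (I k) → ℝ)
    (x y : GState K I) :
    gibbsIter μv A R σ n ζ x - gibbsIter μv A R σ n ζ y = (sweepLin μv A R σ)^[n] (x - y) := by
  rw [gibbsIter_sub_gibbsIter, sub_self, gibbsIter_zero_innov μv]

section Integrability

variable {Ω : Type*} [MeasurableSpace Ω] {P : Measure Ω} [IsFiniteMeasure P]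

lemma integrable_gibbsUpdate {f : Ω → GState K I} {k : Fin K} {z : Ω → Fin (I k) → ℝ}
    (hf : Integrable f P) (hz : Integrable z P) :
    Integrable (fun ω => gibbsUpdate μv A R (f ω) k (z ω)) P := by
  have hmulVec {l : Fin K} (M : Matrix (Fin (I k)) (Fin (I l)) ℝ) {g : Ω → Fin (I l) → ℝ}
      (hg : Integrable g P) : Integrable (fun ω => M *ᵥ g ω) P :=
    (Matrix.toLin' M).toContinuousLinearMap.integrable_comp hg
  have hblock : Integrable (fun ω => μv k + ∑ j ∈ Finset.univ.erase k,
      A k j *ᵥ (f ω j - μv j) + R k *ᵥ z ω) P :=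
    ((integrable_const _).add (integrable_finsetSum _ fun j _ =>
      hmulVec _ ((hf.eval j).sub (integrable_const _)))).add (hmulVec _ hz)
  refine Integrable.of_eval fun j => ?_
  by_cases hj : j = k
  · subst hj
    simpa [gibbsUpdate] using hblock
  · simpa [gibbsUpdate, Function.update_of_ne hj] using hf.eval j

lemma integrable_gibbsSweep {f : Ω → GState K I} {zs : Ω → ∀ k : Fin K, Fin (I k) → ℝ}
    (hf : Integrable f P) (hzs : Integrable zs P) :
    Integrable (fun ω => gibbsSweep μv A R σ (f ω) (zs ω)) P := by
  unfold gibbsSweep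
  induction (List.finRange K).map σ generalizing f with
  | nil => exact hf
  | cons k l ih => exact ih (integrable_gibbsUpdate μv A R hf (hzs.eval k))

lemma integrable_gibbsIter {n : ℕ} {f : Ω → GState K I}
    {ζ : Ω → Fin n → ∀ k : Fin K, Fin (I k) → ℝ} (hf : Integrable f P) (hζ : Integrable ζ P) :
    Integrable (fun ω => gibbsIter μv A R σ n (ζ ω) (f ω)) P := by
  unfold gibbsIter
  induction List.finRange n generalizing f with
  | nil => exact hf
  | cons i l ih => exact ih (integrable_gibbsSweep μv A R σ hf (hζ.eval i))

end Integrability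

instance (ι : Type*) [Fintype ι] : IsProbabilityMeasure (stdGaussian ι) := by
  unfold _root_.stdGaussian
  infer_instance

instance (n : ℕ) : IsProbabilityMeasure (innovLaw K I n) := by
  unfold innovLaw
  infer_instance

lemma integrable_id_innovLaw (n : ℕ) : Integrable id (innovLaw K I n) :=
  integrable_id_pi fun _ => integrable_id_pi fun _ => integrable_id_pi fun _ =>
    IsGaussian.integrable_id

lemma integrable_gibbsIter_innovLaw (n : ℕ) (x : GState K I) :
    Integrable (fun ζ => gibbsIter μv A R σ n ζ x) (innovLaw K I n) :=
  integrable_gibbsIter μv A R σ (integrable_const x) (integrable_id_innovLaw n)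

instance (n : ℕ) (x : GState K I) : IsProbabilityMeasure (nStepLaw μv A R σ n x) :=
  Measure.isProbabilityMeasure_map (integrable_gibbsIter_innovLaw μv A R σ n x).aemeasurable

lemma integrable_id_nStepLaw (n : ℕ) (x : GState K I) :
    Integrable id (nStepLaw μv A R σ n x) :=
  (integrable_map_measure aestronglyMeasurable_id
    (integrable_gibbsIter_innovLaw μv A R σ n x).aemeasurable).2
    (integrable_gibbsIter_innovLaw μv A R σ n x)

lemma integral_nStepLaw_sub_integral_nStepLaw (n : ℕ) (x y : GState K I) :
    ∫ u, u ∂nStepLaw μv A R σ n x - ∫ v, v ∂nStepLaw μv A R σ n y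
      = (sweepLin μv A R σ)^[n] (x - y) := by
  rw [nStepLaw, nStepLaw,
    integral_map (f := fun u => u) (integrable_gibbsIter_innovLaw μv A R σ n x).aemeasurable
      aestronglyMeasurable_id,
    integral_map (f := fun v => v) (integrable_gibbsIter_innovLaw μv A R σ n y).aemeasurable
      aestronglyMeasurable_id,
    ← integral_sub (integrable_gibbsIter_innovLaw μv A R σ n x)
      (integrable_gibbsIter_innovLaw μv A R σ n y)]
  simp only [gibbsIter_sub_gibbsIter_same_innov, integral_const, probReal_univ, one_smul]

end GibbsSampler

theorem crn_composition_W2_optimal_general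
    (K : ℕ) (I : Fin K → ℕ) (μv : GState K I)
    (A : ∀ k l : Fin K, Matrix (Fin (I k)) (Fin (I l)) ℝ)
    (R : ∀ k : Fin K, Matrix (Fin (I k)) (Fin (I k)) ℝ)
    (σ : Equiv.Perm (Fin K))
    (n : ℕ) (x y : GState K I) :
    ((crnPairLaw μv A R σ n x y).map Prod.fst = nStepLaw μv A R σ n x
      ∧ (crnPairLaw μv A R σ n x y).map Prod.snd = nStepLaw μv A R σ n y)
    ∧ (∫⁻ p, ENNReal.ofReal (gNormSq (p.1 - p.2)) ∂(crnPairLaw μv A R σ n x y))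
        = ENNReal.ofReal (gNormSq ((sweepLin μv A R σ)^[n] (x - y)))
    ∧ ∀ γ : Measure (GState K I × GState K I),
        γ.map Prod.fst = nStepLaw μv A R σ n x → γ.map Prod.snd = nStepLaw μv A R σ n y →
        ENNReal.ofReal (gNormSq ((sweepLin μv A R σ)^[n] (x - y)))
          ≤ ∫⁻ p, ENNReal.ofReal (gNormSq (p.1 - p.2)) ∂γ := by
  have hpair : AEMeasurable (fun ζ => (gibbsIter μv A R σ n ζ x, gibbsIter μv A R σ n ζ y))
      (innovLaw K I n) :=
    (integrable_gibbsIter_innovLaw μv A R σ n x).aemeasurable.prodMk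
      (integrable_gibbsIter_innovLaw μv A R σ n y).aemeasurable
  refine ⟨⟨?_, ?_⟩, ?_, fun γ h₁ h₂ => ?_⟩
  · rw [crnPairLaw, AEMeasurable.map_map_of_aemeasurable measurable_fst.aemeasurable hpair]
    rfl
  · rw [crnPairLaw, AEMeasurable.map_map_of_aemeasurable measurable_snd.aemeasurable hpair]
    rfl
  · have hcost : Measurable fun p : GState K I × GState K I =>
        ENNReal.ofReal (gNormSq (p.1 - p.2)) :=
      (continuous_gNormSq.comp (continuous_fst.sub continuous_snd)).measurable.ennreal_ofReal
    rw [crnPairLaw, lintegral_map' hcost.aemeasurable hpair]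
    simp only [gibbsIter_sub_gibbsIter_same_innov, lintegral_const, measure_univ, mul_one]
  · rw [← integral_nStepLaw_sub_integral_nStepLaw]
    exact ofReal_gNormSq_sub_integral_le_lintegral (integrable_id_nStepLaw μv A R σ n x)
      (integrable_id_nStepLaw μv A R σ n y) h₁ h₂

/-- Lemma: optimality of the composition of `W₂`-optimal couplings for
Gaussians.  For a Gaussian target `N(μ, Q⁻¹)`, the composed common-random-numbers coupling of
the blocked Gibbs sweep is, after any number `n ≥ 1` of iterations, a coupling of `Pⁿ(x,·)`
and `Pⁿ(y,·)` minimizing `∫‖u − v‖² dγ`, and the minimal value is `‖Bⁿ(x − y)‖²`. -/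
theorem crn_composition_W2_optimal
    (K : ℕ) (I : Fin K → ℕ) (μv : GState K I)
    (Q : ∀ k l : Fin K, Matrix (Fin (I k)) (Fin (I l)) ℝ)
    (hQsym : ∀ k l i j, Q k l i j = Q l k j i)
    (hQ : (Matrix.of fun p q : (k : Fin K) × Fin (I k) => Q p.1 q.1 p.2 q.2).PosDef)
    (hQkk : ∀ k, (Q k k).PosDef)
    (A : ∀ k l : Fin K, Matrix (Fin (I k)) (Fin (I l)) ℝ)
    (hAdiag : ∀ k, A k k = 0)
    (hAoff : ∀ k l, l ≠ k → A k l = -((Q k k)⁻¹ * Q k l))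
    (R : ∀ k : Fin K, Matrix (Fin (I k)) (Fin (I k)) ℝ)
    (hR : ∀ k, R k = ((hQkk k).inv.posSemidef).sqrt)
    (σ : Equiv.Perm (Fin K))
    (n : ℕ) (hn : 1 ≤ n) (x y : GState K I) :
    ((crnPairLaw μv A R σ n x y).map Prod.fst = nStepLaw μv A R σ n x
      ∧ (crnPairLaw μv A R σ n x y).map Prod.snd = nStepLaw μv A R σ n y)
    ∧ (∫⁻ p, ENNReal.ofReal (gNormSq (p.1 - p.2)) ∂(crnPairLaw μv A R σ n x y))
        = ENNReal.ofReal (gNormSq ((sweepLin μv A R σ)^[n] (x - y)))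
    ∧ ∀ γ : Measure (GState K I × GState K I),
        γ.map Prod.fst = nStepLaw μv A R σ n x → γ.map Prod.snd = nStepLaw μv A R σ n y →
        ENNReal.ofReal (gNormSq ((sweepLin μv A R σ)^[n] (x - y)))
          ≤ ∫⁻ p, ENNReal.ofReal (gNormSq (p.1 - p.2)) ∂γ :=
  crn_composition_W2_optimal_general K I μv A R σ n x y
end
end

section
/- Products of W₂-optimal couplings are W₂-optimal for product measures: if p = ⊗_{i=1}^n p_i and q = ⊗_{i=1}^n q_i are product probability measures on ℝ^{d_1} × ⋯ × ℝ^{d_n}, each p_i, q_i having finite second moments, and if for each i the coupling μ_i of (p_i, q_i) minimizes ∫‖x_i − y_i‖² dμ_i over all couplings of (p_i, q_i), then the product coupling ⊗_{i=1}^n μ_i (with coordinates reordered so that it is a measure on the product space squared) minimizes ∫‖x − y‖² dμ over all couplings μ of (p, q). -/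
open MeasureTheory ProbabilityTheory Filter
open scoped ENNReal NNReal Classical

noncomputable section

/-- Squared Euclidean norm on `ι → ℝ`. -/
def vNormSq {ι : Type*} [Fintype ι] (v : ι → ℝ) : ℝ := ∑ i, (v i) ^ 2

/-- Squared Euclidean norm on the product space `Π i, (Fin (d i) → ℝ)`:
`‖x‖² = Σ_i ‖x_i‖²`. -/
def pNormSq {n : ℕ} {d : Fin n → ℕ} (x : ∀ i : Fin n, (Fin (d i) → ℝ)) : ℝ :=
  ∑ i, vNormSq (x i)

/-! The cost `‖x - y‖²` is the sum of the coordinate costs `‖x i - y i‖²`. The `i`-th coordinate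
pair of any coupling of `⊗ p i` and `⊗ q i` is a coupling of `p i` and `q i`, while that of the
product coupling is `μc i` itself. Hence the cost of the product coupling is the sum of the optimal
costs of the factors, each of which is at most the corresponding term for the competitor. -/

namespace MeasureTheory.Measure

section Coupling

variable {α β : Type*} [MeasurableSpace α] [MeasurableSpace β]

def IsCoupling (γ : Measure (α × β)) (μ : Measure α) (ν : Measure β) : Prop :=
  γ.map Prod.fst = μ ∧ γ.map Prod.snd = ν

theorem IsCoupling.isProbabilityMeasure {γ : Measure (α × β)} {μ : Measure α} {ν : Measure β}
    (h : IsCoupling γ μ ν) [IsProbabilityMeasure μ] : IsProbabilityMeasure γ :=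
  have : IsProbabilityMeasure (γ.map Prod.fst) := h.1 ▸ ‹_›
  isProbabilityMeasure_of_map Prod.fst

end Coupling

section Pi

variable {ι : Type*} {α β : ι → Type*} [∀ i, MeasurableSpace (α i)] [∀ i, MeasurableSpace (β i)]

theorem measurable_arrowProdEquivProdArrow :
    Measurable (Equiv.arrowProdEquivProdArrow ι α β) :=
  (measurable_pi_lambda _ fun i => (measurable_pi_apply i).fst).prodMk
    (measurable_pi_lambda _ fun i => (measurable_pi_apply i).snd)

theorem measurable_prodMap_eval (i : ι) :
    Measurable (Prod.map (Function.eval i) (Function.eval i) :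
      (∀ i, α i) × (∀ i, β i) → α i × β i) :=
  (measurable_pi_apply i).prodMap (measurable_pi_apply i)

variable [Fintype ι]

theorem IsCoupling.pi {μ : ∀ i, Measure (α i × β i)} {p : ∀ i, Measure (α i)}
    {q : ∀ i, Measure (β i)} [∀ i, IsProbabilityMeasure (p i)]
    (hμ : ∀ i, IsCoupling (μ i) (p i) (q i)) :
    IsCoupling ((Measure.pi μ).map (Equiv.arrowProdEquivProdArrow ι α β))
      (Measure.pi p) (Measure.pi q) := by
  have := fun i => (hμ i).isProbabilityMeasure
  constructor
  · rw [map_map measurable_fst measurable_arrowProdEquivProdArrow]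
    exact (pi_map_pi fun i => measurable_fst.aemeasurable).trans
      (congrArg Measure.pi (funext fun i => (hμ i).1))
  · rw [map_map measurable_snd measurable_arrowProdEquivProdArrow]
    exact (pi_map_pi fun i => measurable_snd.aemeasurable).trans
      (congrArg Measure.pi (funext fun i => (hμ i).2))

theorem map_prodMap_eval_map_arrowProdEquivProdArrow (μ : ∀ i, Measure (α i × β i))
    [∀ i, IsProbabilityMeasure (μ i)] (i : ι) :
    ((Measure.pi μ).map (Equiv.arrowProdEquivProdArrow ι α β)).map
      (Prod.map (Function.eval i) (Function.eval i)) = μ i := by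
  rw [map_map (measurable_prodMap_eval i) measurable_arrowProdEquivProdArrow]
  exact (measurePreserving_eval μ i).map_eq

theorem IsCoupling.map_prodMap_eval {γ : Measure ((∀ i, α i) × (∀ i, β i))}
    {p : ∀ i, Measure (α i)} {q : ∀ i, Measure (β i)}
    [∀ i, IsProbabilityMeasure (p i)] [∀ i, IsProbabilityMeasure (q i)]
    (hγ : IsCoupling γ (Measure.pi p) (Measure.pi q)) (i : ι) :
    IsCoupling (γ.map (Prod.map (Function.eval i) (Function.eval i))) (p i) (q i) := by
  constructor
  · rw [map_map measurable_fst (measurable_prodMap_eval i), Prod.map_fst',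
      ← map_map (measurable_pi_apply i) measurable_fst, hγ.1]
    exact (measurePreserving_eval p i).map_eq
  · rw [map_map measurable_snd (measurable_prodMap_eval i), Prod.map_snd',
      ← map_map (measurable_pi_apply i) measurable_snd, hγ.2]
    exact (measurePreserving_eval q i).map_eq

theorem lintegral_sum_prodMap_eval (γ : Measure ((∀ i, α i) × (∀ i, β i)))
    {c : ∀ i, α i × β i → ℝ≥0∞} (hc : ∀ i, Measurable (c i)) :
    ∫⁻ z, ∑ i, c i (z.1 i, z.2 i) ∂γ
      = ∑ i, ∫⁻ w, c i w ∂(γ.map (Prod.map (Function.eval i) (Function.eval i))) := by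
  refine (lintegral_finsetSum _ fun i _ => (hc i).comp (measurable_prodMap_eval i)).trans ?_
  exact Finset.sum_congr rfl fun i _ => (lintegral_map (hc i) (measurable_prodMap_eval i)).symm

theorem IsCoupling.lintegral_sum_map_pi_le {μ : ∀ i, Measure (α i × β i)}
    {p : ∀ i, Measure (α i)} {q : ∀ i, Measure (β i)}
    [∀ i, IsProbabilityMeasure (p i)] [∀ i, IsProbabilityMeasure (q i)]
    (hμ : ∀ i, IsCoupling (μ i) (p i) (q i)) {c : ∀ i, α i × β i → ℝ≥0∞}
    (hc : ∀ i, Measurable (c i))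
    (hopt : ∀ i γ, IsCoupling γ (p i) (q i) → ∫⁻ w, c i w ∂(μ i) ≤ ∫⁻ w, c i w ∂γ)
    {γ : Measure ((∀ i, α i) × (∀ i, β i))} (hγ : IsCoupling γ (Measure.pi p) (Measure.pi q)) :
    ∫⁻ z, ∑ i, c i (z.1 i, z.2 i) ∂((Measure.pi μ).map (Equiv.arrowProdEquivProdArrow ι α β))
      ≤ ∫⁻ z, ∑ i, c i (z.1 i, z.2 i) ∂γ := by
  have := fun i => (hμ i).isProbabilityMeasure
  rw [lintegral_sum_prodMap_eval _ hc, lintegral_sum_prodMap_eval _ hc]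
  refine Finset.sum_le_sum fun i _ => ?_
  rw [map_prodMap_eval_map_arrowProdEquivProdArrow]
  exact hopt i _ (hγ.map_prodMap_eval i)

end Pi

end MeasureTheory.Measure

open MeasureTheory.Measure

theorem measurable_vNormSq {ι : Type*} [Fintype ι] : Measurable (vNormSq (ι := ι)) :=
  Finset.measurable_sum _ fun i _ => (measurable_pi_apply i).pow_const 2

theorem ofReal_pNormSq {n : ℕ} {d : Fin n → ℕ} (x : ∀ i : Fin n, (Fin (d i) → ℝ)) :
    ENNReal.ofReal (pNormSq x) = ∑ i, ENNReal.ofReal (vNormSq (x i)) :=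
  ENNReal.ofReal_sum_of_nonneg fun _ _ => Finset.sum_nonneg fun _ _ => sq_nonneg _

theorem product_of_W2_optimal_couplings_is_W2_optimal_general
    (n : ℕ) (d : Fin n → ℕ)
    (p q : ∀ i : Fin n, Measure (Fin (d i) → ℝ))
    [∀ i, IsProbabilityMeasure (p i)] [∀ i, IsProbabilityMeasure (q i)]
    (μc : ∀ i : Fin n, Measure ((Fin (d i) → ℝ) × (Fin (d i) → ℝ)))
    (hμc : ∀ i, (μc i).map Prod.fst = p i ∧ (μc i).map Prod.snd = q i)
    (hopt : ∀ i, ∀ γ : Measure ((Fin (d i) → ℝ) × (Fin (d i) → ℝ)),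
      γ.map Prod.fst = p i → γ.map Prod.snd = q i →
      (∫⁻ z, ENNReal.ofReal (vNormSq (z.1 - z.2)) ∂(μc i))
        ≤ ∫⁻ z, ENNReal.ofReal (vNormSq (z.1 - z.2)) ∂γ) :
    ((Measure.pi μc).map
          (fun f => ((fun i => (f i).1, fun i => (f i).2) :
            (∀ i : Fin n, (Fin (d i) → ℝ)) × (∀ i : Fin n, (Fin (d i) → ℝ))))).map
        Prod.fst = Measure.pi p
    ∧ ((Measure.pi μc).map
          (fun f => ((fun i => (f i).1, fun i => (f i).2) :
            (∀ i : Fin n, (Fin (d i) → ℝ)) × (∀ i : Fin n, (Fin (d i) → ℝ))))).map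
        Prod.snd = Measure.pi q
    ∧ ∀ γ : Measure ((∀ i : Fin n, (Fin (d i) → ℝ)) × (∀ i : Fin n, (Fin (d i) → ℝ))),
        γ.map Prod.fst = Measure.pi p → γ.map Prod.snd = Measure.pi q →
        (∫⁻ z, ENNReal.ofReal (pNormSq (z.1 - z.2))
            ∂((Measure.pi μc).map
                (fun f => ((fun i => (f i).1, fun i => (f i).2) :
                  (∀ i : Fin n, (Fin (d i) → ℝ)) × (∀ i : Fin n, (Fin (d i) → ℝ))))))
          ≤ ∫⁻ z, ENNReal.ofReal (pNormSq (z.1 - z.2)) ∂γ := by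
  have hprod := IsCoupling.pi hμc
  refine ⟨hprod.1, hprod.2, fun γ hγ₁ hγ₂ => ?_⟩
  simp only [ofReal_pNormSq, Pi.sub_apply]
  exact IsCoupling.lintegral_sum_map_pi_le hμc
    (fun i => ENNReal.measurable_ofReal.comp (measurable_vNormSq.comp
      (measurable_fst.sub measurable_snd)))
    (fun i γ hγ => hopt i γ hγ.1 hγ.2) ⟨hγ₁, hγ₂⟩

/-- Lemma: products of `W₂`-optimal couplings are `W₂`-optimal for product
measures.  If each `μc i` is a coupling of `(p i, q i)` minimizing the expected squared
distance, then the product coupling (with coordinates reordered) is a coupling of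
`(⊗ p i, ⊗ q i)` minimizing the expected squared distance. -/
theorem product_of_W2_optimal_couplings_is_W2_optimal
    (n : ℕ) (d : Fin n → ℕ)
    (p q : ∀ i : Fin n, Measure (Fin (d i) → ℝ))
    [∀ i, IsProbabilityMeasure (p i)] [∀ i, IsProbabilityMeasure (q i)]
    (hp2 : ∀ i, (∫⁻ x, ENNReal.ofReal (vNormSq x) ∂(p i)) < ⊤)
    (hq2 : ∀ i, (∫⁻ x, ENNReal.ofReal (vNormSq x) ∂(q i)) < ⊤)
    (μc : ∀ i : Fin n, Measure ((Fin (d i) → ℝ) × (Fin (d i) → ℝ)))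
    (hμc : ∀ i, (μc i).map Prod.fst = p i ∧ (μc i).map Prod.snd = q i)
    (hopt : ∀ i, ∀ γ : Measure ((Fin (d i) → ℝ) × (Fin (d i) → ℝ)),
      γ.map Prod.fst = p i → γ.map Prod.snd = q i →
      (∫⁻ z, ENNReal.ofReal (vNormSq (z.1 - z.2)) ∂(μc i))
        ≤ ∫⁻ z, ENNReal.ofReal (vNormSq (z.1 - z.2)) ∂γ) :
    ((Measure.pi μc).map
          (fun f => ((fun i => (f i).1, fun i => (f i).2) :
            (∀ i : Fin n, (Fin (d i) → ℝ)) × (∀ i : Fin n, (Fin (d i) → ℝ))))).map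
        Prod.fst = Measure.pi p
    ∧ ((Measure.pi μc).map
          (fun f => ((fun i => (f i).1, fun i => (f i).2) :
            (∀ i : Fin n, (Fin (d i) → ℝ)) × (∀ i : Fin n, (Fin (d i) → ℝ))))).map
        Prod.snd = Measure.pi q
    ∧ ∀ γ : Measure ((∀ i : Fin n, (Fin (d i) → ℝ)) × (∀ i : Fin n, (Fin (d i) → ℝ))),
        γ.map Prod.fst = Measure.pi p → γ.map Prod.snd = Measure.pi q →
        (∫⁻ z, ENNReal.ofReal (pNormSq (z.1 - z.2))
            ∂((Measure.pi μc).map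
                (fun f => ((fun i => (f i).1, fun i => (f i).2) :
                  (∀ i : Fin n, (Fin (d i) → ℝ)) × (∀ i : Fin n, (Fin (d i) → ℝ))))))
          ≤ ∫⁻ z, ENNReal.ofReal (pNormSq (z.1 - z.2)) ∂γ :=
  product_of_W2_optimal_couplings_is_W2_optimal_general n d p q μc hμc hopt

end
end

section
/- For product probability measures p = ⊗_{i=1}^n p_i and q = ⊗_{i=1}^n q_i, the maximal meeting probability Pr_max(p, q) := 1 − ‖p − q‖_TV satisfies min_{1≤i≤n} Pr_max(p_i, q_i) ≥ Pr_max(p, q) ≥ ∏_{i=1}^n Pr_max(p_i, q_i). -/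
open MeasureTheory ProbabilityTheory Filter
open scoped ENNReal NNReal Classical BigOperators

noncomputable section

/-- Total variation distance between two measures. -/
def tvDist {X : Type*} [MeasurableSpace X] (p q : Measure X) : ℝ :=
  ⨆ s : {s : Set X // MeasurableSet s}, |(p s.1).toReal - (q s.1).toReal|

/-- Maximal meeting probability `Pr_max(p, q) = 1 − ‖p − q‖_TV`. -/
def prMax {X : Type*} [MeasurableSpace X] (p q : Measure X) : ℝ := 1 - tvDist p q
/-!
Projecting onto a coordinate can only decrease the total variation distance, which gives the
upper bound. For the lower bound, any measure `m` with `m ≤ p` and `m ≤ q` has mass at most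
`Pr_max(p, q)`, and for each factor the Hahn decomposition of `pᵢ - qᵢ` produces such an
`mᵢ` of mass at least `Pr_max(pᵢ, qᵢ)`. The product of the `mᵢ` lies below both product
measures and has mass `∏ mᵢ(𝒳ᵢ)`.
-/

open Set

section TotalVariation

variable {X : Type*} [MeasurableSpace X]

lemma tvDist_le {p q : Measure X} {c : ℝ}
    (h : ∀ s, MeasurableSet s → |p.real s - q.real s| ≤ c) : tvDist p q ≤ c :=
  have : Nonempty {s : Set X // MeasurableSet s} := ⟨⟨∅, .empty⟩⟩
  ciSup_le fun s => h s.1 s.2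

lemma abs_measureReal_sub_le_tvDist (p q : Measure X) [IsFiniteMeasure p] [IsFiniteMeasure q]
    {s : Set X} (hs : MeasurableSet s) : |p.real s - q.real s| ≤ tvDist p q := by
  refine le_ciSup (f := fun t : {t : Set X // MeasurableSet t} => |p.real t.1 - q.real t.1|)
    ⟨p.real univ + q.real univ, ?_⟩ ⟨s, hs⟩
  rintro _ ⟨t, rfl⟩
  have hp := measureReal_mono (μ := p) (subset_univ t.1)
  have hq := measureReal_mono (μ := q) (subset_univ t.1)
  rw [abs_le]
  constructor <;> linarith [measureReal_nonneg (μ := p) (s := t.1),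
    measureReal_nonneg (μ := q) (s := t.1)]

lemma tvDist_map_le (p q : Measure X) [IsFiniteMeasure p] [IsFiniteMeasure q]
    {Y : Type*} [MeasurableSpace Y] {f : X → Y} (hf : Measurable f) :
    tvDist (p.map f) (q.map f) ≤ tvDist p q :=
  tvDist_le fun s hs => by
    rw [map_measureReal_apply hf hs, map_measureReal_apply hf hs]
    exact abs_measureReal_sub_le_tvDist p q (hf hs)

variable (p q : Measure X) [IsProbabilityMeasure p] [IsProbabilityMeasure q]

lemma tvDist_le_one : tvDist p q ≤ 1 :=
  tvDist_le fun s _ => by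
    rw [abs_le]
    constructor <;> linarith [measureReal_le_one (μ := p) (s := s),
      measureReal_le_one (μ := q) (s := s), measureReal_nonneg (μ := p) (s := s),
      measureReal_nonneg (μ := q) (s := s)]

lemma prMax_nonneg : 0 ≤ prMax p q :=
  sub_nonneg.2 (tvDist_le_one p q)

lemma prMax_le_prMax_map {Y : Type*} [MeasurableSpace Y] {f : X → Y} (hf : Measurable f) :
    prMax p q ≤ prMax (p.map f) (q.map f) :=
  sub_le_sub_left (tvDist_map_le p q hf) 1

end TotalVariation

section CommonComponent

variable {X : Type*} [MeasurableSpace X] {p q : Measure X}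

lemma restrict_le_restrict_of_forall_subset_le {s : Set X} (hs : MeasurableSet s)
    (h : ∀ t, MeasurableSet t → t ⊆ s → p t ≤ q t) : p.restrict s ≤ q.restrict s :=
  Measure.le_iff.2 fun t ht => by
    rw [Measure.restrict_apply ht, Measure.restrict_apply ht]
    exact h _ (ht.inter hs) inter_subset_right

variable [IsProbabilityMeasure p] [IsProbabilityMeasure q]

lemma measureReal_univ_le_prMax {m : Measure X} (hmp : m ≤ p) (hmq : m ≤ q) :
    m.real univ ≤ prMax p q := by
  have : IsFiniteMeasure m := isFiniteMeasure_of_le p hmp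
  suffices tvDist p q ≤ 1 - m.real univ by rw [prMax]; linarith
  refine tvDist_le fun s hs => ?_
  have hsplit := measureReal_add_measureReal_compl (μ := m) hs
  have hp := probReal_compl_eq_one_sub (μ := p) hs
  have hq := probReal_compl_eq_one_sub (μ := q) hs
  have hle {ν : Measure X} [IsFiniteMeasure ν] (h : m ≤ ν) (t : Set X) :
      m.real t ≤ ν.real t :=
    ENNReal.toReal_mono (measure_ne_top ν t) (h t)
  rw [abs_le]
  constructor <;> linarith [hle hmp s, hle hmq s, hle hmp sᶜ, hle hmq sᶜ]

lemma exists_le_le_prMax_le_measureReal_univ :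
    ∃ m ≤ p, m ≤ q ∧ prMax p q ≤ m.real univ := by
  obtain ⟨s, hs, hqp, hpq⟩ := hahn_decomposition p q
  refine ⟨q.restrict s + p.restrict sᶜ, ?_, ?_, ?_⟩
  · exact (add_le_add_left (restrict_le_restrict_of_forall_subset_le hs hqp) _).trans_eq
      (Measure.restrict_add_restrict_compl hs)
  · exact (add_le_add_right (restrict_le_restrict_of_forall_subset_le hs.compl hpq) _).trans_eq
      (Measure.restrict_add_restrict_compl hs)
  · have htv := (le_abs_self _).trans (abs_measureReal_sub_le_tvDist p q hs)
    rw [measureReal_add_apply, measureReal_restrict_apply_univ, measureReal_restrict_apply_univ,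
      probReal_compl_eq_one_sub hs, prMax]
    linarith

end CommonComponent

lemma MeasureTheory.Measure.pi_mono {ι : Type*} [Fintype ι] {α : ι → Type*}
    [∀ i, MeasurableSpace (α i)] {μ ν : ∀ i, Measure (α i)} (h : ∀ i, μ i ≤ ν i) :
    Measure.pi μ ≤ Measure.pi ν :=
  Measure.le_iff.2 fun t ht => by
    rw [Measure.pi_def, Measure.pi_def, toMeasure_apply _ _ ht, toMeasure_apply _ _ ht]
    refine (OuterMeasure.le_pi.2 fun s _ => ?_) t
    exact (OuterMeasure.pi_pi_le _ s).trans (Finset.prod_le_prod' fun i _ => h i _)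

/-- Lemma: maximal meeting probabilities of product measures.
For product probability measures `p = ⊗ pᵢ` and `q = ⊗ qᵢ`,
`min_i Pr_max(pᵢ, qᵢ) ≥ Pr_max(p, q) ≥ ∏ i, Pr_max(pᵢ, qᵢ)`. -/
theorem prMax_product_bounds
    (n : ℕ) (𝒳 : Fin n → Type*) [∀ i, MeasurableSpace (𝒳 i)]
    (p q : ∀ i : Fin n, Measure (𝒳 i))
    [∀ i, IsProbabilityMeasure (p i)] [∀ i, IsProbabilityMeasure (q i)] :
    (∀ i, prMax (Measure.pi p) (Measure.pi q) ≤ prMax (p i) (q i))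
    ∧ (∏ i, prMax (p i) (q i)) ≤ prMax (Measure.pi p) (Measure.pi q) := by
  refine ⟨fun i => ?_, ?_⟩
  · simpa only [(measurePreserving_eval p i).map_eq, (measurePreserving_eval q i).map_eq]
      using prMax_le_prMax_map (Measure.pi p) (Measure.pi q) (measurable_pi_apply i)
  · choose m hmp hmq hprMax using fun i =>
      exists_le_le_prMax_le_measureReal_univ (p := p i) (q := q i)
    have : ∀ i, IsFiniteMeasure (m i) := fun i => isFiniteMeasure_of_le (p i) (hmp i)
    calc ∏ i, prMax (p i) (q i) ≤ ∏ i, (m i).real univ :=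
          Finset.prod_le_prod (fun i _ => prMax_nonneg (p i) (q i)) fun i _ => hprMax i
      _ = (Measure.pi m).real univ := by
          simp only [measureReal_def, Measure.pi_univ, ENNReal.toReal_prod]
      _ ≤ prMax (Measure.pi p) (Measure.pi q) :=
          measureReal_univ_le_prMax (Measure.pi_mono hmp) (Measure.pi_mono hmq)
end
end

section
/- For shifted product Gaussians whose standardized mean differences scale as c_{i,d}·d^{−α} with α > 0, the product of the coordinate-wise maximal meeting probabilities satisfies ln( ∏_{i=1}^d Pr_max(p_i^{(d)}, q_i^{(d)}) ) / ( −d^{1−α}·c̃_d ) → 1 as d → ∞, where c̃_d := (Σ_{i=1}^d |c_{i,d}|) / (d·√(2π)); equivalently, ∏_{i=1}^d Pr_max(p_i^{(d)}, q_i^{(d)}) = exp( −d^{1−α}·c̃_d·(1 + o(1)) ). -/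
open MeasureTheory ProbabilityTheory Filter Topology
open scoped ENNReal NNReal Classical BigOperators

noncomputable section

/-! For equal variances the density of `N(μ, σ²)` exceeds that of `N(ν, σ²)` exactly on the
half-line beyond the midpoint `(μ + ν)/2`. That half-line is therefore a Hahn decomposition, and
since the two laws differ by a shift, the total variation distance is the `N(μ, σ²)`-mass of an
interval of length `|μ - ν|` centred at `μ`. Bounding the density on that interval gives
`r/√(2π)·e^{-r²/8} ≤ ‖p - q‖_TV ≤ r/√(2π)` with `r = |μ - ν|/σ`. Here `r_i = |c_i| d^{-α} → 0`
uniformly in `i`, and `t ≤ -log (1 - t) ≤ t/(1 - t)` gives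
`-log ∏ (1 - t_i) = (1 + o(1)) ∑ r_i/√(2π)`, which is the normalising denominator. -/

open Real Set

lemma tvDist_comm {X : Type*} [MeasurableSpace X] (p q : Measure X) :
    tvDist p q = tvDist q p := by
  simp only [tvDist, abs_sub_comm]

lemma tvDist_nonneg {X : Type*} [MeasurableSpace X] (p q : Measure X) : 0 ≤ tvDist p q :=
  Real.iSup_nonneg fun _ => abs_nonneg _

section HahnDecomposition

variable {X : Type*} [MeasurableSpace X] {p q : Measure X} {S : Set X}

lemma measureReal_le_of_restrict_le [IsFiniteMeasure p] (h : q.restrict S ≤ p.restrict S)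
    {t : Set X} (ht : t ⊆ S) : q.real t ≤ p.real t := by
  refine ENNReal.toReal_mono (measure_ne_top p t) ?_
  rw [← Measure.restrict_eq_self q ht, ← Measure.restrict_eq_self p ht]
  exact h t

variable [IsFiniteMeasure p] [IsFiniteMeasure q]

lemma measureReal_sub_le_of_restrict_le (hS : MeasurableSet S)
    (hqp : q.restrict S ≤ p.restrict S) (hpq : p.restrict Sᶜ ≤ q.restrict Sᶜ)
    {s : Set X} (hs : MeasurableSet s) : p.real s - q.real s ≤ p.real S - q.real S := by
  have outside := measureReal_le_of_restrict_le hpq (t := s \ S) fun _ hx => hx.2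
  have inside := measureReal_le_of_restrict_le hqp (t := S \ s) sdiff_subset
  rw [← measureReal_inter_add_sdiff (s := s) hS (μ := p),
    ← measureReal_inter_add_sdiff (s := s) hS (μ := q),
    ← measureReal_inter_add_sdiff (s := S) hs (μ := p),
    ← measureReal_inter_add_sdiff (s := S) hs (μ := q), inter_comm S s]
  linarith

lemma tvDist_eq_measureReal_sub_of_restrict_le (huniv : p univ = q univ) (hS : MeasurableSet S)
    (hqp : q.restrict S ≤ p.restrict S) (hpq : p.restrict Sᶜ ≤ q.restrict Sᶜ) :
    tvDist p q = p.real S - q.real S := by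
  have huniv' : p.real univ = q.real univ := congrArg ENNReal.toReal huniv
  have hbound : ∀ s, MeasurableSet s → |p.real s - q.real s| ≤ p.real S - q.real S := by
    intro s hs
    have hcompl := measureReal_sub_le_of_restrict_le hS.compl hpq
      (by rwa [compl_compl]) hs
    rw [measureReal_compl hS, measureReal_compl hS] at hcompl
    exact abs_le.2 ⟨by linarith, measureReal_sub_le_of_restrict_le hS hqp hpq hs⟩
  refine le_antisymm (ciSup_le fun s => hbound s.1 s.2) ?_
  have hbdd : BddAbove (range fun s : {s : Set X // MeasurableSet s} =>
      |p.real s.1 - q.real s.1|) :=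
    ⟨_, forall_mem_range.2 fun s => hbound s.1 s.2⟩
  calc p.real S - q.real S = |p.real S - q.real S| :=
        (abs_of_nonneg (sub_nonneg.2 (measureReal_le_of_restrict_le hqp subset_rfl))).symm
    _ ≤ tvDist p q := le_ciSup hbdd ⟨S, hS⟩

end HahnDecomposition

section Gaussian

variable {μ ν : ℝ} {v : ℝ≥0}

lemma gaussianPDFReal_le_gaussianPDFReal_of_sq_le {x : ℝ} (h : (x - μ) ^ 2 ≤ (x - ν) ^ 2) :
    gaussianPDFReal ν v x ≤ gaussianPDFReal μ v x := by
  simp only [gaussianPDFReal]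
  gcongr

lemma gaussianPDFReal_le_inv_sqrt (x : ℝ) : gaussianPDFReal μ v x ≤ (√(2 * π * v))⁻¹ := by
  refine mul_le_of_le_one_right (by positivity) (exp_le_one_iff.2 ?_)
  rw [neg_div]
  exact neg_nonpos.2 (by positivity)

lemma gaussianReal_restrict_le_restrict (hv : v ≠ 0) {S : Set ℝ} (hS : MeasurableSet S)
    (h : ∀ x ∈ S, (x - μ) ^ 2 ≤ (x - ν) ^ 2) :
    (gaussianReal ν v).restrict S ≤ (gaussianReal μ v).restrict S := by
  rw [gaussianReal_of_var_ne_zero _ hv, gaussianReal_of_var_ne_zero _ hv,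
    restrict_withDensity hS, restrict_withDensity hS]
  exact withDensity_mono <| (ae_restrict_iff' hS).2 <| ae_of_all _ fun x hx =>
    ENNReal.ofReal_le_ofReal (gaussianPDFReal_le_gaussianPDFReal_of_sq_le (h x hx))

lemma measureReal_gaussianReal_eq_integral (hv : v ≠ 0) (s : Set ℝ) :
    (gaussianReal μ v).real s = ∫ x in s, gaussianPDFReal μ v x := by
  rw [measureReal_def, gaussianReal_apply_eq_integral _ hv,
    ENNReal.toReal_ofReal (setIntegral_nonneg_of_ae (ae_of_all _ (gaussianPDFReal_nonneg μ v)))]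

lemma tvDist_gaussianReal_eq (hv : v ≠ 0) (hνμ : ν ≤ μ) :
    tvDist (gaussianReal μ v) (gaussianReal ν v)
      = (gaussianReal μ v).real (Ico (μ - (μ - ν) / 2) (μ + (μ - ν) / 2)) := by
  set S := Ici (μ - (μ - ν) / 2)
  have hS : MeasurableSet S := measurableSet_Ici
  have hcloser : ∀ x ∈ S, (x - μ) ^ 2 ≤ (x - ν) ^ 2 := fun x (hx : _ ≤ x) => by nlinarith
  have hfarther : ∀ x ∈ Sᶜ, (x - ν) ^ 2 ≤ (x - μ) ^ 2 := fun x hx => by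
    simp only [S, mem_compl_iff, mem_Ici, not_le] at hx; nlinarith
  have hshift :
      (gaussianReal ν v).real S = (gaussianReal μ v).real (Ici (μ + (μ - ν) / 2)) := by
    conv_rhs => rw [← add_sub_cancel ν μ, ← gaussianReal_map_add_const,
      map_measureReal_apply (measurable_add_const _) measurableSet_Ici, preimage_add_const_Ici]
    simp only [S]; congr 2; ring
  rw [tvDist_eq_measureReal_sub_of_restrict_le (by simp) hS
      (gaussianReal_restrict_le_restrict hv hS hcloser)
      (gaussianReal_restrict_le_restrict hv hS.compl hfarther),
    hshift, ← measureReal_sdiff (Ici_subset_Ici.2 (by linarith)) measurableSet_Ici,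
    Ici_sdiff_Ici]

lemma measureReal_gaussianReal_Ico_le (hv : v ≠ 0) {a b : ℝ} (hab : a ≤ b) :
    (gaussianReal μ v).real (Ico a b) ≤ (b - a) / √(2 * π * v) := by
  rw [measureReal_gaussianReal_eq_integral hv]
  calc ∫ x in Ico a b, gaussianPDFReal μ v x ≤ ∫ _ in Ico a b, (√(2 * π * v))⁻¹ :=
        setIntegral_mono_on (integrable_gaussianPDFReal μ v).integrableOn
          (integrableOn_const (by simp)) measurableSet_Ico fun x _ =>
            gaussianPDFReal_le_inv_sqrt x
    _ = (b - a) / √(2 * π * v) := by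
        rw [setIntegral_const, volume_real_Ico_of_le hab, smul_eq_mul, div_eq_mul_inv]

lemma le_measureReal_gaussianReal_Ico (hv : v ≠ 0) {w : ℝ} (hw : 0 ≤ w) :
    2 * w / √(2 * π * v) * exp (-w ^ 2 / (2 * v))
      ≤ (gaussianReal μ v).real (Ico (μ - w) (μ + w)) := by
  rw [measureReal_gaussianReal_eq_integral hv]
  calc 2 * w / √(2 * π * v) * exp (-w ^ 2 / (2 * v))
      = ∫ _ in Ico (μ - w) (μ + w), (√(2 * π * v))⁻¹ * exp (-w ^ 2 / (2 * v)) := by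
        rw [setIntegral_const, volume_real_Ico_of_le (by linarith), smul_eq_mul]
        ring
    _ ≤ ∫ x in Ico (μ - w) (μ + w), gaussianPDFReal μ v x := by
        refine setIntegral_mono_on (integrableOn_const (by simp))
          (integrable_gaussianPDFReal μ v).integrableOn measurableSet_Ico fun x hx => ?_
        have hsq : (x - μ) ^ 2 ≤ w ^ 2 := sq_le_sq' (by linarith [hx.1]) (by linarith [hx.2])
        unfold gaussianPDFReal
        gcongr

end Gaussian

lemma tvDist_gaussianReal_bounds {σ : ℝ} (hσ : 0 < σ) (μ ν : ℝ) :
    |μ - ν| / σ / √(2 * π) * exp (-(|μ - ν| / σ) ^ 2 / 8)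
        ≤ tvDist (gaussianReal μ (σ ^ 2).toNNReal) (gaussianReal ν (σ ^ 2).toNNReal) ∧
      tvDist (gaussianReal μ (σ ^ 2).toNNReal) (gaussianReal ν (σ ^ 2).toNNReal)
        ≤ |μ - ν| / σ / √(2 * π) := by
  wlog hνμ : ν ≤ μ generalizing μ ν
  · rw [tvDist_comm, abs_sub_comm]
    exact this ν μ (le_of_not_ge hνμ)
  have hv : (σ ^ 2).toNNReal ≠ 0 := by simp [hσ.ne']
  have hvσ : ((σ ^ 2).toNNReal : ℝ) = σ ^ 2 := Real.coe_toNNReal _ (sq_nonneg σ)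
  have hsqrt : √(2 * π * σ ^ 2) = √(2 * π) * σ := by
    rw [sqrt_mul (by positivity), sqrt_sq hσ.le]
  rw [tvDist_gaussianReal_eq hv hνμ, abs_of_nonneg (sub_nonneg.2 hνμ)]
  constructor
  · convert le_measureReal_gaussianReal_Ico (μ := μ) hv (w := (μ - ν) / 2) (by linarith)
      using 1
    rw [hvσ, hsqrt]
    field_simp
    norm_num
  · convert measureReal_gaussianReal_Ico_le (μ := μ) hv
      (by linarith : μ - (μ - ν) / 2 ≤ μ + (μ - ν) / 2) using 1
    rw [hvσ, hsqrt]
    field_simp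
    ring

lemma tvDist_gaussianReal_bounds_of_div_eq {μ ν σ c ε M : ℝ} (hσ : 0 < σ) (hε : 0 ≤ ε)
    (hc : (μ - ν) / σ = c * ε) (hcM : |c| ≤ M) :
    exp (-(M * ε) ^ 2 / 8) * (|c| * ε / √(2 * π))
        ≤ tvDist (gaussianReal μ (σ ^ 2).toNNReal) (gaussianReal ν (σ ^ 2).toNNReal) ∧
      tvDist (gaussianReal μ (σ ^ 2).toNNReal) (gaussianReal ν (σ ^ 2).toNNReal)
        ≤ |c| * ε / √(2 * π) := by
  have hr : |μ - ν| / σ = |c| * ε := by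
    rw [← abs_of_pos hσ, ← abs_div, hc, abs_mul, abs_of_nonneg hε]
  obtain ⟨hlower, hupper⟩ := hr ▸ tvDist_gaussianReal_bounds hσ μ ν
  refine ⟨le_trans ?_ hlower, hupper⟩
  rw [mul_comm]
  gcongr

lemma sum_le_neg_log_prod_one_sub {ι : Type*} (s : Finset ι) {t : ι → ℝ}
    (ht : ∀ i ∈ s, t i < 1) : ∑ i ∈ s, t i ≤ -log (∏ i ∈ s, (1 - t i)) := by
  rw [log_prod fun i hi => (sub_pos.2 (ht i hi)).ne', ← Finset.sum_neg_distrib]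
  exact Finset.sum_le_sum fun i hi => by
    linarith [log_le_sub_one_of_pos (sub_pos.2 (ht i hi))]

lemma neg_log_prod_one_sub_le {ι : Type*} (s : Finset ι) {t : ι → ℝ} {τ : ℝ} (hτ : τ < 1)
    (ht₀ : ∀ i ∈ s, 0 ≤ t i) (htτ : ∀ i ∈ s, t i ≤ τ) :
    -log (∏ i ∈ s, (1 - t i)) ≤ (∑ i ∈ s, t i) / (1 - τ) := by
  have hpos : ∀ i ∈ s, 0 < 1 - t i := fun i hi => by linarith [htτ i hi]
  rw [log_prod fun i hi => (hpos i hi).ne', ← Finset.sum_neg_distrib, Finset.sum_div]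
  refine Finset.sum_le_sum fun i hi => ?_
  have hlog := one_sub_inv_le_log_of_pos (hpos i hi)
  have hinv : (1 - t i)⁻¹ - 1 = t i / (1 - t i) := by
    field_simp [(hpos i hi).ne']
    ring
  calc -log (1 - t i) ≤ t i / (1 - t i) := by linarith
    _ ≤ t i / (1 - τ) :=
      div_le_div_of_nonneg_left (ht₀ i hi) (by linarith) (by linarith [htτ i hi])

lemma tendsto_neg_log_prod_one_sub_div_sum {α : Type*} {l : Filter α} {ι : α → Type*}
    [∀ a, Fintype (ι a)] {t b : (a : α) → ι a → ℝ} {κ τ : α → ℝ}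
    (hκ : Tendsto κ l (𝓝 1)) (hτ : Tendsto τ l (𝓝 0))
    (ht₀ : ∀ᶠ a in l, ∀ i, 0 ≤ t a i) (hκbt : ∀ᶠ a in l, ∀ i, κ a * b a i ≤ t a i)
    (htb : ∀ᶠ a in l, ∀ i, t a i ≤ b a i) (hbτ : ∀ᶠ a in l, ∀ i, b a i ≤ τ a)
    (hb : ∀ᶠ a in l, 0 < ∑ i, b a i) :
    Tendsto (fun a => -log (∏ i, (1 - t a i)) / ∑ i, b a i) l (𝓝 1) := by
  have hτinv : Tendsto (fun a => (1 - τ a)⁻¹) l (𝓝 1) := by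
    simpa using (tendsto_const_nhds.sub hτ).inv₀ (by norm_num : (1 : ℝ) - 0 ≠ 0)
  have hτ1 : ∀ᶠ a in l, τ a < 1 := hτ.eventually (gt_mem_nhds one_pos)
  have htτ : ∀ᶠ a in l, ∀ i, t a i ≤ τ a := by
    filter_upwards [htb, hbτ] with a htb hbτ i using (htb i).trans (hbτ i)
  refine tendsto_of_tendsto_of_tendsto_of_le_of_le' hκ hτinv ?_ ?_
  · filter_upwards [htτ, hκbt, hb, hτ1] with a htτ hκbt hb hτ1
    rw [le_div_iff₀ hb, mul_comm, Finset.sum_mul]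
    calc ∑ i, b a i * κ a ≤ ∑ i, t a i :=
          Finset.sum_le_sum fun i _ => by linarith [hκbt i]
      _ ≤ _ := sum_le_neg_log_prod_one_sub _ fun i _ => (htτ i).trans_lt hτ1
  · filter_upwards [ht₀, htτ, htb, hb, hτ1] with a ht₀ htτ htb hb hτ1
    rw [div_le_iff₀ hb]
    calc -log (∏ i, (1 - t a i)) ≤ (∑ i, t a i) / (1 - τ a) :=
          neg_log_prod_one_sub_le _ hτ1 (fun i _ => ht₀ i) fun i _ => htτ i
      _ ≤ (∑ i, b a i) / (1 - τ a) := by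
          gcongr with i
          exact htb i
      _ = (1 - τ a)⁻¹ * ∑ i, b a i := div_eq_inv_mul _ _

lemma rpow_one_sub_mul_sum_div {ι : Type*} (s : Finset ι) (f : ι → ℝ) {x : ℝ} (hx : 0 < x)
    (α C : ℝ) : x ^ (1 - α) * ((∑ i ∈ s, f i) / (x * C)) = ∑ i ∈ s, f i * x ^ (-α) / C := by
  rw [sub_eq_add_neg, rpow_add hx, rpow_one, ← Finset.sum_div, ← Finset.sum_mul]
  field_simp

/-- Lemma: product of coordinate-wise maximal meeting probabilities for
shifted Gaussians.  With `p_i^{(d)} = N(μ_{i,d}, σ_{i,d}²)`, `q_i^{(d)} = N(ν_{i,d}, σ_{i,d}²)`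
and `(μ_{i,d} − ν_{i,d})/σ_{i,d} = c_{i,d}·d^{−α}`, `α > 0`, one has
`ln(∏ᵢ Pr_max(p_i^{(d)}, q_i^{(d)})) / (−d^{1−α}·c̃_d) → 1` as `d → ∞`, where
`c̃_d = (Σᵢ |c_{i,d}|)/(d·√(2π))`. -/
theorem log_product_prMax_gaussians_asymptotics
    (μ ν σ c : (d : ℕ) → Fin d → ℝ) (α : ℝ) (hα : 0 < α)
    (hσ : ∀ d i, 0 < σ d i)
    (hc : ∀ d i, (μ d i - ν d i) / σ d i = c d i * (d : ℝ) ^ (-α))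
    (m M : ℝ) (hm : 0 < m) (hbd : ∀ d i, m ≤ |c d i| ∧ |c d i| ≤ M) :
    Tendsto (fun d : ℕ =>
        Real.log (∏ i : Fin d,
            prMax (gaussianReal (μ d i) ((σ d i ^ 2).toNNReal))
              (gaussianReal (ν d i) ((σ d i ^ 2).toNNReal)))
          / (-(d : ℝ) ^ ((1:ℝ) - α) * ((∑ i : Fin d, |c d i|) / (d * Real.sqrt (2 * Real.pi)))))
      atTop (𝓝 1) := by
  set ε : ℕ → ℝ := fun d => (d : ℝ) ^ (-α)
  have hε : Tendsto ε atTop (𝓝 0) :=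
    (tendsto_rpow_neg_atTop hα).comp tendsto_natCast_atTop_atTop
  have hε₀ : ∀ d, 0 ≤ ε d := fun d => rpow_nonneg d.cast_nonneg _
  have hκ : Tendsto (fun d => exp (-(M * ε d) ^ 2 / 8)) atTop (𝓝 1) := by
    simpa using (((hε.const_mul M).pow 2).neg.div_const 8).rexp
  have hτ : Tendsto (fun d => M * ε d / √(2 * π)) atTop (𝓝 0) := by
    simpa using (hε.const_mul M).div_const (√(2 * π))
  have hbounds := fun d i =>
    tvDist_gaussianReal_bounds_of_div_eq (hσ d i) (hε₀ d) (hc d i) (hbd d i).2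
  refine (tendsto_neg_log_prod_one_sub_div_sum (b := fun d i => |c d i| * ε d / √(2 * π)) hκ hτ
    (.of_forall fun d i => tvDist_nonneg _ _) (.of_forall fun d i => (hbounds d i).1)
    (.of_forall fun d i => (hbounds d i).2)
    (.of_forall fun d i => by gcongr; exact (hbd d i).2) ?_).congr' ?_
  · filter_upwards [eventually_ge_atTop 1] with d hd
    have hεd : 0 < ε d := rpow_pos_of_pos (by exact_mod_cast hd) _
    refine Finset.sum_pos (fun i _ => ?_) (Finset.univ_nonempty_iff.2 ⟨⟨0, hd⟩⟩)
    have := hm.trans_le (hbd d i).1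
    positivity
  · filter_upwards [eventually_ge_atTop 1] with d hd
    rw [neg_mul, rpow_one_sub_mul_sum_div _ _ (by exact_mod_cast hd), div_neg, neg_div]
    rfl
end
end

section
/- Let Q = [[I, M], [Mᵀ, I]] be a positive definite two-block precision matrix with identity diagonal blocks, let Σ = Q^{-1}, let L be a block lower-triangular matrix with LLᵀ = Σ, let B^F = [[0, −M], [0, MᵀM]] be the forward Gibbs autoregressive matrix, and set N^F := L^{-1}B^F L. Then for every integer t ≥ 2, ‖(N^F)^t‖₂ ≤ ρ(MᵀM)^{t−1}, and moreover ρ(B^F) = ρ(MᵀM). -/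
open Matrix
open scoped Classical

noncomputable section

/-- Euclidean norm of a finitely-indexed real vector. -/
def eNorm {ι : Type*} [Fintype ι] (v : ι → ℝ) : ℝ := Real.sqrt (∑ i, (v i) ^ 2)

/-- Spectral radius of a real matrix: the largest modulus of its (complex) eigenvalues. -/
def specRad {ι : Type*} [Fintype ι] [DecidableEq ι] (B : Matrix ι ι ℝ) : ℝ :=
  sSup {r : ℝ | ∃ z : ℂ, z ∈ spectrum ℂ (B.map Complex.ofReal) ∧ r = ‖z‖}

/-- Spectral (induced 2-) norm of a real matrix. -/
def specNorm {ι : Type*} [Fintype ι] (A : Matrix ι ι ℝ) : ℝ :=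
  sSup {r : ℝ | ∃ v : ι → ℝ, eNorm v ≤ 1 ∧ r = eNorm (A.mulVec v)}

open scoped MatrixOrder ComplexOrder

/-!
Since `LLᵀ = Q⁻¹`, we have `Q = L⁻ᵀL⁻¹`, so `‖L⁻¹XL‖₂` is the operator norm of `X` for the
energy norm `xᵀQx`, and it suffices to show `(Bᵗ)ᵀQBᵗ ≤ ρ^{2(t-1)} Q` in the Loewner order.
Only the second block column of `Bᵗ` is nonzero, and with `S = MᵀM` one computes
`(Bᵗ)ᵀQBᵗ = diag(0, S^{2t-1}(I - S))`, while completing the square gives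
`Q - diag(0, I - S) = [I M]ᵀ[I M] ≥ 0`. Positive definiteness of `Q` forces `0 ≤ S ≤ I`, and
the functional calculus of `S` then yields `S^{2t-1}(I - S) ≤ ρ(S)^{2t-2}(I - S)`.
The spectral radius identity holds because `B` is block upper triangular with diagonal blocks
`0` and `S`.
-/

section FunctionalCalculus

variable {A : Type*} [TopologicalSpace A] [Ring A] [StarRing A] [PartialOrder A]
  [StarOrderedRing A] [Algebra ℝ A] [ContinuousFunctionalCalculus ℝ A IsSelfAdjoint]
  [NonnegSpectrumClass ℝ A]

theorem pow_succ_mul_one_sub_le_smul {a : A} (ha₀ : 0 ≤ a) (ha₁ : a ≤ 1) {ρ : ℝ}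
    (hρ : ∀ x ∈ spectrum ℝ a, x ≤ ρ) (k : ℕ) :
    a ^ (k + 1) * (1 - a) ≤ ρ ^ k • (1 - a) := by
  have ha : IsSelfAdjoint a := .of_nonneg ha₀
  have h₁ : ∀ x ∈ spectrum ℝ a, x ≤ 1 := by
    rwa [← le_algebraMap_iff_spectrum_le, map_one]
  have hcfc : cfc (fun x : ℝ ↦ 1 - x) a = 1 - a := by
    rw [cfc_sub (fun _ : ℝ ↦ 1) (fun x ↦ x) a, cfc_const_one ℝ a, cfc_id' ℝ a]
  have hcfc_le : cfc (fun x : ℝ ↦ x ^ (k + 1) * (1 - x)) a ≤ cfc (fun x ↦ ρ ^ k * (1 - x)) a :=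
    cfc_mono fun x hx ↦ by
      have hx₀ := spectrum_nonneg_of_nonneg ha₀ hx
      gcongr
      · linarith [h₁ x hx]
      · exact (pow_le_pow_of_le_one hx₀ (h₁ x hx) k.le_succ).trans
          (pow_le_pow_left₀ hx₀ (hρ x hx) k)
  rwa [cfc_mul (fun x : ℝ ↦ x ^ (k + 1)) _ a, cfc_const_mul (ρ ^ k) (fun x : ℝ ↦ 1 - x) a,
    cfc_pow_id a, hcfc] at hcfc_le

end FunctionalCalculus

namespace Matrix

variable {ι m n : Type*} [Fintype ι] [Fintype m] [Fintype n]

theorem spectrum_fromBlocks_zero₂₁ [DecidableEq m] [DecidableEq n] {K : Type*} [Field K]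
    (A : Matrix m m K) (B : Matrix m n K) (D : Matrix n n K) :
    spectrum K (fromBlocks A B 0 D) = spectrum K A ∪ spectrum K D := by
  ext z
  simp only [Set.mem_union, mem_spectrum_iff_isRoot_charpoly, charpoly_fromBlocks_zero₂₁,
    Polynomial.root_mul]

theorem spectrum_zero_subset [DecidableEq m] (K : Type*) [Field K] :
    spectrum K (0 : Matrix m m K) ⊆ {0} := by
  intro z hz
  rw [mem_spectrum_iff_isRoot_charpoly, charpoly_zero, Polynomial.IsRoot.def,
    Polynomial.eval_pow, Polynomial.eval_X] at hz
  exact pow_eq_zero_iff'.mp hz |>.1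

theorem ofReal_mem_spectrum_map [DecidableEq ι] {B : Matrix ι ι ℝ} {x : ℝ}
    (hx : x ∈ spectrum ℝ B) : (x : ℂ) ∈ spectrum ℂ (B.map Complex.ofReal) := by
  rw [mem_spectrum_iff_isRoot_charpoly] at hx ⊢
  have := hx.map (f := Complex.ofRealHom)
  rwa [← charpoly_map] at this

theorem nonsing_inv_mul_mul_pow [DecidableEq ι] {R : Type*} [CommRing R] {L : Matrix ι ι R}
    (hL : IsUnit L.det) (X : Matrix ι ι R) (t : ℕ) : (L⁻¹ * X * L) ^ t = L⁻¹ * X ^ t * L := by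
  lift L to (Matrix ι ι R)ˣ using (isUnit_iff_isUnit_det L).mpr hL
  rw [← coe_units_inv]
  exact Units.conj_pow' L X t

theorem fromBlocks_zero_pow_succ [DecidableEq m] [DecidableEq n] {R : Type*} [Ring R]
    (B : Matrix m n R) (D : Matrix n n R) (k : ℕ) :
    fromBlocks (0 : Matrix m m R) B 0 D ^ (k + 1) = fromBlocks 0 (B * D ^ k) 0 (D ^ (k + 1)) := by
  induction k with
  | zero => simp
  | succ k ih =>
    rw [pow_succ, ih, fromBlocks_multiply]
    simp [pow_succ, Matrix.mul_assoc]

theorem PosSemidef.fromBlocks_zero_zero_zero {R : Type*} [Ring R] [PartialOrder R] [StarRing R]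
    {D : Matrix n n R} (hD : D.PosSemidef) :
    (fromBlocks (0 : Matrix m m R) 0 0 D).PosSemidef := by
  have := hD.conjTranspose_mul_mul_same (fromCols (0 : Matrix n m R) (1 : Matrix n n R))
  rwa [conjTranspose_fromCols_eq_fromRows_conjTranspose, fromRows_mul, fromRows_mul_fromCols,
    conjTranspose_zero, conjTranspose_one, Matrix.zero_mul, Matrix.zero_mul, Matrix.one_mul,
    Matrix.mul_zero, Matrix.mul_one, Matrix.mul_one] at this

theorem fromBlocks_zero_zero_zero_le {R : Type*} [RCLike R] {X Y : Matrix n n R} (h : X ≤ Y) :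
    fromBlocks (0 : Matrix m m R) 0 0 X ≤ fromBlocks 0 0 0 Y := by
  rw [le_iff] at h ⊢
  have hsub : fromBlocks (0 : Matrix m m R) 0 0 Y - fromBlocks 0 0 0 X
      = fromBlocks 0 0 0 (Y - X) := by
    rw [sub_eq_add_neg, fromBlocks_neg, fromBlocks_add, sub_eq_add_neg]
    simp
  exact hsub ▸ h.fromBlocks_zero_zero_zero

end Matrix

section SpectralRadius

variable {ι : Type*} [Fintype ι] [DecidableEq ι]

theorem specRad_nonneg (B : Matrix ι ι ℝ) : 0 ≤ specRad B :=
  Real.sSup_nonneg (by rintro _ ⟨z, -, rfl⟩; exact norm_nonneg z)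

theorem norm_le_specRad {B : Matrix ι ι ℝ} {z : ℂ}
    (hz : z ∈ spectrum ℂ (B.map Complex.ofReal)) : ‖z‖ ≤ specRad B := by
  refine le_csSup ?_ ⟨z, hz, rfl⟩
  refine ((B.map Complex.ofReal).finite_spectrum.image (‖·‖)).bddAbove.mono ?_
  rintro _ ⟨z, hz, rfl⟩
  exact ⟨z, hz, rfl⟩

theorem specRad_le {B : Matrix ι ι ℝ} {c : ℝ} (hc : 0 ≤ c)
    (h : ∀ z ∈ spectrum ℂ (B.map Complex.ofReal), ‖z‖ ≤ c) : specRad B ≤ c :=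
  Real.sSup_le (by rintro _ ⟨z, hz, rfl⟩; exact h z hz) hc

theorem le_specRad_of_mem_spectrum {B : Matrix ι ι ℝ} {x : ℝ} (hx : x ∈ spectrum ℝ B) :
    x ≤ specRad B := by
  have := norm_le_specRad (Matrix.ofReal_mem_spectrum_map hx)
  rw [Complex.norm_real, Real.norm_eq_abs] at this
  exact (le_abs_self x).trans this

theorem specRad_fromBlocks_zero {m n : Type*} [Fintype m] [Fintype n] [DecidableEq m]
    [DecidableEq n] (B : Matrix m n ℝ) (D : Matrix n n ℝ) :
    specRad (fromBlocks (0 : Matrix m m ℝ) B 0 D) = specRad D := by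
  have hspec : spectrum ℂ ((fromBlocks (0 : Matrix m m ℝ) B 0 D).map Complex.ofReal)
      = spectrum ℂ (0 : Matrix m m ℂ) ∪ spectrum ℂ (D.map Complex.ofReal) := by
    rw [fromBlocks_map, Matrix.map_zero _ Complex.ofReal_zero,
      Matrix.map_zero _ Complex.ofReal_zero, Matrix.spectrum_fromBlocks_zero₂₁]
  apply le_antisymm
  · refine specRad_le (specRad_nonneg D) fun z hz ↦ ?_
    rcases hspec ▸ hz with hz | hz
    · rw [Matrix.spectrum_zero_subset ℂ hz, norm_zero]
      exact specRad_nonneg D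
    · exact norm_le_specRad hz
  · exact specRad_le (specRad_nonneg _) fun z hz ↦ norm_le_specRad (hspec ▸ Or.inr hz)

end SpectralRadius

section SpectralNorm

variable {ι : Type*} [Fintype ι]

theorem eNorm_sq (v : ι → ℝ) : eNorm v ^ 2 = v ⬝ᵥ v := by
  rw [eNorm, Real.sq_sqrt (Finset.sum_nonneg fun i _ ↦ sq_nonneg (v i))]
  simp [dotProduct, sq]

theorem specNorm_le_of_transpose_mul_self_le [DecidableEq ι] {A : Matrix ι ι ℝ} {c : ℝ}
    (hc : 0 ≤ c) (h : Aᵀ * A ≤ c ^ 2 • 1) : specNorm A ≤ c := by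
  refine Real.sSup_le ?_ hc
  rintro _ ⟨v, hv, rfl⟩
  have hquad : (A *ᵥ v) ⬝ᵥ (A *ᵥ v) ≤ c ^ 2 * (v ⬝ᵥ v) := by
    have := (le_iff.mp h).dotProduct_mulVec_nonneg v
    rw [star_trivial, sub_mulVec, smul_mulVec, one_mulVec, dotProduct_sub, dotProduct_smul,
      smul_eq_mul, ← mulVec_mulVec, dotProduct_mulVec, vecMul_transpose] at this
    linarith
  have hv₀ : 0 ≤ eNorm v := Real.sqrt_nonneg _
  refine le_of_pow_le_pow_left₀ two_ne_zero hc ?_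
  calc eNorm (A *ᵥ v) ^ 2 ≤ (c * eNorm v) ^ 2 := by
        rwa [mul_pow, eNorm_sq, eNorm_sq]
    _ ≤ c ^ 2 := by
      rw [mul_pow]
      exact mul_le_of_le_one_right (sq_nonneg c) (pow_le_one₀ hv₀ hv)

theorem specNorm_conj_le_of_transpose_mul_mul_le [DecidableEq ι] {L X : Matrix ι ι ℝ}
    (hL : IsUnit L.det) {c : ℝ} (hc : 0 ≤ c)
    (h : Xᵀ * ((L⁻¹)ᵀ * L⁻¹) * X ≤ c ^ 2 • ((L⁻¹)ᵀ * L⁻¹)) : specNorm (L⁻¹ * X * L) ≤ c := by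
  have hLQL : Lᵀ * ((L⁻¹)ᵀ * L⁻¹) * L = 1 := by
    rw [← Matrix.mul_assoc, ← transpose_mul, nonsing_inv_mul L hL, transpose_one,
      Matrix.one_mul, nonsing_inv_mul L hL]
  apply specNorm_le_of_transpose_mul_self_le hc
  calc (L⁻¹ * X * L)ᵀ * (L⁻¹ * X * L) = star L * (Xᵀ * ((L⁻¹)ᵀ * L⁻¹) * X) * L := by
        simp only [star_eq_conjTranspose, conjTranspose_eq_transpose_of_trivial, transpose_mul,
          Matrix.mul_assoc]
    _ ≤ star L * (c ^ 2 • ((L⁻¹)ᵀ * L⁻¹)) * L := star_left_conjugate_le_conjugate h L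
    _ = c ^ 2 • 1 := by
      rw [Matrix.mul_smul, Matrix.smul_mul, star_eq_conjTranspose,
        conjTranspose_eq_transpose_of_trivial, hLQL]

end SpectralNorm

section TwoBlockGibbs

variable {m n : Type*} [Fintype m] [Fintype n] [DecidableEq m] [DecidableEq n]

theorem transpose_mul_self_le_one_of_fromBlocks_posDef {M : Matrix m n ℝ}
    (hQ : (fromBlocks 1 M Mᵀ 1).PosDef) : Mᵀ * M ≤ 1 := by
  rw [← conjTranspose_eq_transpose_of_trivial] at hQ
  let : Invertible (1 : Matrix m m ℝ) := invertibleOne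
  have := (PosDef.fromBlocks₁₁ (A := (1 : Matrix m m ℝ)) M 1 PosDef.one).mp hQ.posSemidef
  rwa [inv_one, Matrix.mul_one, conjTranspose_eq_transpose_of_trivial, ← le_iff] at this

theorem fromBlocks_zero_one_sub_transpose_mul_self_le (M : Matrix m n ℝ) :
    fromBlocks 0 0 0 (1 - Mᵀ * M) ≤ fromBlocks 1 M Mᵀ 1 := by
  have h := posSemidef_conjTranspose_mul_self
    (fromBlocks (1 : Matrix m m ℝ) M 0 (0 : Matrix n n ℝ))
  rw [conjTranspose_eq_transpose_of_trivial, fromBlocks_transpose, fromBlocks_multiply] at h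
  rw [le_iff, sub_eq_add_neg, fromBlocks_neg, fromBlocks_add]
  simpa using h

theorem forward_pow_succ_transpose_mul_precision_mul (M : Matrix m n ℝ) (k : ℕ) :
    (fromBlocks 0 (-M) 0 (Mᵀ * M) ^ (k + 1))ᵀ * fromBlocks 1 M Mᵀ 1 *
        fromBlocks 0 (-M) 0 (Mᵀ * M) ^ (k + 1)
      = fromBlocks 0 0 0 ((Mᵀ * M) ^ (2 * k + 1) * (1 - Mᵀ * M)) := by
  rw [Matrix.fromBlocks_zero_pow_succ, fromBlocks_transpose, fromBlocks_multiply,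
    fromBlocks_multiply]
  simp only [transpose_zero, transpose_neg, transpose_mul, transpose_pow, transpose_transpose,
    Matrix.zero_mul, Matrix.mul_zero, Matrix.mul_one, Matrix.neg_mul, Matrix.mul_neg, add_zero,
    neg_zero, fromBlocks_inj, true_and]
  have hpow : ∀ j, (Mᵀ * M) ^ j * Mᵀ * (M * (Mᵀ * M) ^ k) = (Mᵀ * M) ^ (j + k + 1) := fun j ↦ by
    rw [Matrix.mul_assoc, ← Matrix.mul_assoc Mᵀ, ← pow_succ', ← pow_add, add_assoc]
  rw [Matrix.mul_assoc _ Mᵀ M, ← pow_succ, neg_add_cancel, Matrix.zero_mul, add_zero,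
    Matrix.add_mul, Matrix.neg_mul, hpow, hpow, Matrix.mul_sub, Matrix.mul_one, ← pow_succ,
    neg_add, neg_neg, ← sub_eq_add_neg, two_mul, Nat.add_right_comm k 1 k]

theorem forward_pow_succ_transpose_mul_precision_mul_le {M : Matrix m n ℝ}
    (hQ : (fromBlocks 1 M Mᵀ 1).PosDef) (k : ℕ) :
    (fromBlocks 0 (-M) 0 (Mᵀ * M) ^ (k + 1))ᵀ * fromBlocks 1 M Mᵀ 1 *
        fromBlocks 0 (-M) 0 (Mᵀ * M) ^ (k + 1)
      ≤ (specRad (Mᵀ * M) ^ k) ^ 2 • fromBlocks 1 M Mᵀ 1 := by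
  have hS₀ : 0 ≤ Mᵀ * M := by
    rw [nonneg_iff_posSemidef, ← conjTranspose_eq_transpose_of_trivial]
    exact posSemidef_conjTranspose_mul_self M
  have hS : (Mᵀ * M) ^ (2 * k + 1) * (1 - Mᵀ * M)
      ≤ (specRad (Mᵀ * M) ^ k) ^ 2 • (1 - Mᵀ * M) := by
    rw [← pow_mul, mul_comm k]
    exact pow_succ_mul_one_sub_le_smul hS₀ (transpose_mul_self_le_one_of_fromBlocks_posDef hQ)
      (fun _ ↦ le_specRad_of_mem_spectrum) _
  calc _ = fromBlocks 0 0 0 ((Mᵀ * M) ^ (2 * k + 1) * (1 - Mᵀ * M)) :=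
        forward_pow_succ_transpose_mul_precision_mul M k
    _ ≤ fromBlocks 0 0 0 ((specRad (Mᵀ * M) ^ k) ^ 2 • (1 - Mᵀ * M)) :=
        Matrix.fromBlocks_zero_zero_zero_le hS
    _ = (specRad (Mᵀ * M) ^ k) ^ 2 • fromBlocks 0 0 0 (1 - Mᵀ * M) := by simp [fromBlocks_smul]
    _ ≤ _ := smul_le_smul_of_nonneg_left (fromBlocks_zero_one_sub_transpose_mul_self_le M)
        (by positivity)

end TwoBlockGibbs

theorem two_block_normalized_forward_matrix_power_norm_bound_general
    (d₁ d₂ : ℕ) (M : Matrix (Fin d₁) (Fin d₂) ℝ)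
    (hQ : (Matrix.fromBlocks 1 M Mᵀ 1).PosDef)
    (L : Matrix (Fin d₁ ⊕ Fin d₂) (Fin d₁ ⊕ Fin d₂) ℝ)
    (hL : L * Lᵀ = (Matrix.fromBlocks 1 M Mᵀ 1)⁻¹)
    (hLdet : IsUnit L.det)
    (BF : Matrix (Fin d₁ ⊕ Fin d₂) (Fin d₁ ⊕ Fin d₂) ℝ)
    (hBF : BF = Matrix.fromBlocks 0 (-M) 0 (Mᵀ * M)) :
    specRad BF = specRad (Mᵀ * M)
    ∧ ∀ t : ℕ, 2 ≤ t → specNorm ((L⁻¹ * BF * L) ^ t) ≤ specRad (Mᵀ * M) ^ (t - 1) := by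
  subst hBF
  refine ⟨specRad_fromBlocks_zero _ _, fun t ht ↦ ?_⟩
  obtain ⟨k, rfl⟩ : ∃ k, t = k + 1 := ⟨t - 1, by omega⟩
  have hQL : (L⁻¹)ᵀ * L⁻¹ = fromBlocks 1 M Mᵀ 1 := by
    rw [transpose_nonsing_inv, ← Matrix.mul_inv_rev, hL,
      nonsing_inv_nonsing_inv _ ((isUnit_iff_isUnit_det _).mp hQ.isUnit)]
  rw [Matrix.nonsing_inv_mul_mul_pow hLdet, Nat.add_sub_cancel]
  apply specNorm_conj_le_of_transpose_mul_mul_le hLdet (pow_nonneg (specRad_nonneg _) k)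
  rw [hQL]
  exact forward_pow_succ_transpose_mul_precision_mul_le hQ k

/-- Lemma: powers of the similarity-transformed forward two-block Gibbs
matrix.  For `Q = [[I, M],[Mᵀ, I]]` positive definite, `Σ = Q⁻¹`, `L` block lower-triangular
with `LLᵀ = Σ`, `B^F = [[0, −M],[0, MᵀM]]` and `N^F = L⁻¹B^F L`, one has
`ρ(B^F) = ρ(MᵀM)` and `‖(N^F)^t‖₂ ≤ ρ(MᵀM)^{t−1}` for every `t ≥ 2`. -/
theorem two_block_normalized_forward_matrix_power_norm_bound
    (d₁ d₂ : ℕ) (M : Matrix (Fin d₁) (Fin d₂) ℝ)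
    (hQ : (Matrix.fromBlocks 1 M Mᵀ 1).PosDef)
    (L₁₁ : Matrix (Fin d₁) (Fin d₁) ℝ) (L₂₁ : Matrix (Fin d₂) (Fin d₁) ℝ)
    (L₂₂ : Matrix (Fin d₂) (Fin d₂) ℝ)
    (L : Matrix (Fin d₁ ⊕ Fin d₂) (Fin d₁ ⊕ Fin d₂) ℝ)
    (hLtri : L = Matrix.fromBlocks L₁₁ 0 L₂₁ L₂₂)
    (hL : L * Lᵀ = (Matrix.fromBlocks 1 M Mᵀ 1)⁻¹)
    (hLdet : IsUnit L.det)
    (BF : Matrix (Fin d₁ ⊕ Fin d₂) (Fin d₁ ⊕ Fin d₂) ℝ)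
    (hBF : BF = Matrix.fromBlocks 0 (-M) 0 (Mᵀ * M)) :
    specRad BF = specRad (Mᵀ * M)
    ∧ ∀ t : ℕ, 2 ≤ t → specNorm ((L⁻¹ * BF * L) ^ t) ≤ specRad (Mᵀ * M) ^ (t - 1) :=
  two_block_normalized_forward_matrix_power_norm_bound_general d₁ d₂ M hQ L hL hLdet BF hBF

end
end
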